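/- Suppose a finite group G has an n-split decomposition with respect to an abelian subgroup A, let p be a prime divisor of |G|, and let P be a p-subgroup of G. If either (1) p ≥ n + 2, or (2) p² > 2n and |P| ≥ p², then P is contained in A. -/

import Mathlib

/-- An `n`-split decomposition of a group `G` with respect to an abelian subgroup `A`:
`G` is partitioned as the disjoint union of `A` and nonempty subsets `B 1, ..., B n`,
such that no two distinct elements within any single `B i` commute. -/
def IsSplitDecomp {G : Type*} [Group G] (A : Subgroup G) {n : ℕ} (B : Fin n → Set G) : Prop :=
  IsMulCommutative A ∧
  (A : Set G) ∪ (⋃ i, B i) = Set.univ ∧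
  (∀ i, Disjoint (A : Set G) (B i)) ∧
  (Pairwise fun i j => Disjoint (B i) (B j)) ∧
  (∀ i, (B i).Nonempty) ∧
  ∀ i, ∀ x ∈ B i, ∀ y ∈ B i, x ≠ y → ¬ Commute x y

/-- A strict `n`-split decomposition: an `n`-split decomposition with `|B i| ≥ 2` for all `i`. -/
def IsStrictSplitDecomp {G : Type*} [Group G] (A : Subgroup G) {n : ℕ} (B : Fin n → Set G) : Prop :=
  IsSplitDecomp A B ∧ ∀ i, 2 ≤ (B i).ncard

/-!
Pairwise commuting elements outside `A` lie in distinct `B i`, so there are at most `n` of them.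
If `x ∈ P \ A` and `H ∋ x` is an abelian subgroup of `P`, then `H ⊓ A` is a proper subgroup of
the `p`-group `H`, of index at least `p`, whence `|H| (p - 1) ≤ n p`. Under (1) take `H = ⟨x⟩`,
of order at least `p`, to get `p - 1 ≤ n`. Under (2) the centralizer of `x` in `P` has order at
least `p²` (it contains `Z(P)`, and equals `P` if it is as small as `Z(P)`); a subgroup of order
`p²` of it is abelian and commutes with `x`, and together with `x` it generates an abelian `H`
with `|H| ≥ p²`, so `p (p - 1) ≤ n < p² / 2`, impossible.
-/

theorem IsPGroup.prime_le_card {G : Type*} [Group G] {p : ℕ} (hp : p.Prime) {H : Subgroup G}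
    [Finite H] (hH : IsPGroup p H) (hH_ne : H ≠ ⊥) : p ≤ Nat.card H :=
  have : Fact p.Prime := ⟨hp⟩
  Nat.le_of_dvd Nat.card_pos (hH.card_eq_or_dvd.resolve_left (Subgroup.card_eq_one.not.mpr hH_ne))

theorem IsPGroup.card_mul_le_card_of_lt {G : Type*} [Group G] {p : ℕ} (hp : p.Prime)
    {H K : Subgroup G} [Finite H] (hH : IsPGroup p H) (hKH : K < H) :
    Nat.card K * p ≤ Nat.card H := by
  have hmul : Nat.card K * K.relIndex H = Nat.card H := by
    simpa only [Subgroup.relIndex_bot_left] using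
      Subgroup.relIndex_mul_relIndex ⊥ K H bot_le hKH.le
  have : Fact p.Prime := ⟨hp⟩
  obtain ⟨a, ha⟩ := hH.exists_card_eq
  obtain ⟨k, -, hk⟩ := (Nat.dvd_prime_pow hp).mp (ha ▸ K.relIndex_dvd_card H)
  have hk0 : k ≠ 0 := by
    rintro rfl
    exact hKH.not_ge (Subgroup.relIndex_eq_one.mp (hk.trans (pow_zero p)))
  calc Nat.card K * p ≤ Nat.card K * K.relIndex H := by
        rw [hk]; exact Nat.mul_le_mul_left _ (Nat.le_self_pow hk0 p)
    _ = Nat.card H := hmul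

theorem IsPGroup.sq_le_card_centralizer {G : Type*} [Group G] [Finite G] {p : ℕ}
    (hp : p.Prime) (hG : IsPGroup p G) (hcard : p ^ 2 ≤ Nat.card G) (x : G) :
    p ^ 2 ≤ Nat.card (Subgroup.centralizer {x}) := by
  have : Fact p.Prime := ⟨hp⟩
  set C := Subgroup.centralizer {x}
  obtain ⟨k, hk⟩ := (hG.to_subgroup C).exists_card_eq
  suffices hpC : p < Nat.card C by
    rw [hk] at hpC ⊢
    exact Nat.pow_le_pow_right hp.pos ((Nat.pow_lt_pow_iff_right hp.one_lt).mp (by simpa using hpC))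
  by_contra! hCp
  have : Nontrivial G := Finite.one_lt_card_iff_nontrivial.mp
    (hp.one_lt.trans_le (Nat.le_self_pow two_ne_zero p |>.trans hcard))
  have hpZ : p ≤ Nat.card (Subgroup.center G) := (hG.to_subgroup _).prime_le_card hp
    ((Subgroup.nontrivial_iff_ne_bot _).mp hG.center_nontrivial)
  have hZC : Subgroup.center G = C :=
    Subgroup.eq_of_le_of_card_ge (Subgroup.center_le_centralizer _) (hCp.trans hpZ)
  have hxC : x ∈ C := Subgroup.mem_centralizer_singleton_iff.mpr rfl
  have hC : C = ⊤ :=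
    Subgroup.centralizer_eq_top_iff_subset.mpr (Set.singleton_subset_iff.mpr (hZC ▸ hxC))
  rw [hC, Subgroup.card_top] at hCp
  nlinarith [hp.two_le]

theorem IsPGroup.exists_isMulCommutative_mem_sq_le_card {G : Type*} [Group G] [Finite G]
    {p : ℕ} (hp : p.Prime) (hG : IsPGroup p G) (hcard : p ^ 2 ≤ Nat.card G) (x : G) :
    ∃ H : Subgroup G, IsMulCommutative H ∧ x ∈ H ∧ p ^ 2 ≤ Nat.card H := by
  have : Fact p.Prime := ⟨hp⟩
  obtain ⟨K, hKC, hK⟩ := Sylow.exists_subgroup_le_card_pow_prime_of_le_card hp hG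
    (hG.sq_le_card_centralizer hp hcard x)
  have : IsMulCommutative K := IsPGroup.isMulCommutative_of_card_eq_prime_sq hK
  have hcomm : ∀ a ∈ insert x (K : Set G), ∀ b ∈ insert x (K : Set G), a * b = b * a := by
    have hxK : ∀ b ∈ K, x * b = b * x := fun b hb =>
      (Subgroup.mem_centralizer_singleton_iff.mp (hKC hb)).symm
    rintro a (rfl | ha) b (rfl | hb)
    exacts [rfl, hxK b hb, (hxK a ha).symm, setLike_mul_comm ha hb]
  refine ⟨Subgroup.closure (insert x K), Subgroup.isMulCommutative_closure hcomm,
    Subgroup.subset_closure (Set.mem_insert x _), hK ▸ Subgroup.card_le_of_le ?_⟩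
  exact fun k hk => Subgroup.subset_closure (Set.mem_insert_of_mem x hk)

namespace IsSplitDecomp

variable {G : Type*} [Group G] {A : Subgroup G} {n : ℕ} {B : Fin n → Set G}

/-- Each `B i` contains at most one element of a commuting set, so such a set outside `A`
injects into `Fin n`. -/
theorem ncard_le_of_pairwise_commute (h : IsSplitDecomp A B) {S : Set G}
    (hS : S.Pairwise Commute) (hSA : Disjoint S A) : S.ncard ≤ n := by
  obtain ⟨-, hcover, -, -, -, hB⟩ := h
  have hmem : ∀ s : S, ∃ i, (s : G) ∈ B i := fun s => by
    have : (s : G) ∈ (A : Set G) ∪ ⋃ i, B i := hcover ▸ Set.mem_univ _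
    simpa [hSA.notMem_of_mem_left s.2] using this
  choose f hf using hmem
  have hf_inj : Function.Injective f := fun s t hst => by
    by_contra hne
    exact hB (f s) s (hf s) t (hst ▸ hf t) (Subtype.coe_ne_coe.mpr hne)
      (hS s.2 t.2 (Subtype.coe_ne_coe.mpr hne))
  simpa [Nat.card_coe_set_eq] using Nat.card_le_card_of_injective f hf_inj

/-- `H ⊓ A` has index at least `p` in `H`, so at least a fraction `1 - 1/p` of `H` lies
outside `A`. -/
theorem card_mul_sub_one_le (h : IsSplitDecomp A B) {p : ℕ} (hp : p.Prime) {H : Subgroup G}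
    [Finite H] [IsMulCommutative H] (hH : IsPGroup p H) (hHA : ¬ H ≤ A) :
    Nat.card H * (p - 1) ≤ n * p := by
  have hlt : H ⊓ A < H := inf_le_left.lt_of_not_ge fun hle => hHA (hle.trans inf_le_right)
  have hinter := hH.card_mul_le_card_of_lt hp hlt
  have hdiff : ((H : Set G) \ A).ncard ≤ n := h.ncard_le_of_pairwise_commute
    (fun a ha b hb _ => setLike_mul_comm ha.1 hb.1) Set.disjoint_sdiff_left
  have hsplit : Nat.card (H ⊓ A : Subgroup G) + ((H : Set G) \ A).ncard = Nat.card H := by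
    have := Set.ncard_inter_add_ncard_sdiff_eq_ncard (H : Set G) A (Set.toFinite _)
    rwa [← Subgroup.coe_inf, ← Nat.card_coe_set_eq, ← Nat.card_coe_set_eq] at this
  have hp1 : p - 1 + 1 = p := Nat.sub_add_cancel hp.one_le
  nlinarith

end IsSplitDecomp

theorem p_subgroup_contained_in_A_general {G : Type*} [Group G] [Finite G]
    (A : Subgroup G) (n : ℕ) (B : Fin n → Set G) (h : IsSplitDecomp A B)
    (p : ℕ) (hp : p.Prime) (P : Subgroup G) (hP : IsPGroup p P)
    (hcond : n + 2 ≤ p ∨ (2 * n < p ^ 2 ∧ p ^ 2 ≤ Nat.card P)) :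
    P ≤ A := by
  intro x hx
  by_contra hxA
  have hbound : ∀ H ≤ P, IsMulCommutative H → x ∈ H → Nat.card H * (p - 1) ≤ n * p :=
    fun H hHP _ hxH => h.card_mul_sub_one_le hp (hP.to_le hHP) fun hHA => hxA (hHA hxH)
  have hp1 : p - 1 + 1 = p := Nat.sub_add_cancel hp.one_le
  rcases hcond with hpn | ⟨hnp, hPcard⟩
  · have hx1 : x ≠ 1 := fun hx1 => hxA (hx1 ▸ A.one_mem)
    have hpx : p ≤ Nat.card (Subgroup.zpowers x) :=
      (hP.to_le (Subgroup.zpowers_le.mpr hx)).prime_le_card hp (Subgroup.zpowers_ne_bot.mpr hx1)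
    have hcount := hbound _ (Subgroup.zpowers_le.mpr hx) inferInstance (Subgroup.mem_zpowers x)
    nlinarith
  · obtain ⟨H, _, hxH, hHcard⟩ := hP.exists_isMulCommutative_mem_sq_le_card hp hPcard ⟨x, hx⟩
    have hcount := hbound (H.map P.subtype) (Subgroup.map_subtype_le _) inferInstance
      ⟨_, hxH, rfl⟩
    rw [Subgroup.card_map_of_injective P.subtype_injective] at hcount
    have hpn : p * (p * (p - 1)) ≤ p * n := by
      nlinarith [Nat.mul_le_mul_right (p - 1) hHcard]
    nlinarith [Nat.le_of_mul_le_mul_left hpn hp.pos, hp.two_le]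

theorem p_subgroup_contained_in_A {G : Type*} [Group G] [Finite G]
    (A : Subgroup G) (n : ℕ) (B : Fin n → Set G) (h : IsSplitDecomp A B)
    (p : ℕ) (hp : p.Prime) (hpG : p ∣ Nat.card G) (P : Subgroup G) (hP : IsPGroup p P)
    (hcond : n + 2 ≤ p ∨ (2 * n < p ^ 2 ∧ p ^ 2 ≤ Nat.card P)) :
    P ≤ A :=
  p_subgroup_contained_in_A_general A n B h p hp P hP hcond
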